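/- For strictly decreasing logits z₁ > z₂ > ⋯ > z_K, log ‖σ(λz)‖₂² is asymptotically equivalent to −2·exp(λ(z₂ − z₁)) as λ → ∞, i.e., their ratio tends to 1. -/

import Mathlib

/-!
Normalising by the largest logit, `σᵢ(λz) = wᵢ / ∑ⱼ wⱼ` with `wᵢ = exp (λ (zᵢ - z₀))`, so
`log ‖σ‖₂² = log (1 + ∑_{i>0} wᵢ²) - 2 log (1 + ∑_{i>0} wᵢ)`. A finite sum of exponentials is
asymptotic to its dominant term, so `∑_{i>0} wᵢ ~ ε := exp (λ (z₁ - z₀)) → 0` while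
`∑_{i>0} wᵢ² ~ ε² = o(ε)`; with `log (1 + x) ~ x` at `0` the right-hand side is `~ -2ε`.
-/

open Filter Real Finset Asymptotics Topology

lemma isEquivalent_log_one_add_nhds_zero : (fun x : ℝ => log (1 + x)) ~[𝓝 0] id := by
  have h := (((hasDerivAt_id (0 : ℝ)).const_add 1).log (by norm_num)).isLittleO
  simp only [id_eq, add_zero, log_one, sub_zero, div_one, smul_eq_mul, mul_one] at h
  exact h

lemma isLittleO_exp_mul_atTop {a b : ℝ} (hab : a < b) :
    (fun t => exp (t * a)) =o[atTop] fun t => exp (t * b) :=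
  isLittleO_exp_comp_exp_comp.mpr <| by
    simpa only [← mul_sub, id_eq] using tendsto_id.atTop_mul_const (sub_pos.mpr hab)

lemma tendsto_exp_mul_atTop_nhds_zero {c : ℝ} (hc : c < 0) :
    Tendsto (fun t => exp (t * c)) atTop (𝓝 0) :=
  tendsto_exp_atBot.comp (tendsto_id.atTop_mul_const_of_neg hc)

lemma isEquivalent_sum_exp_mul_atTop {ι : Type*} [Fintype ι] (c : ι → ℝ) {i₀ : ι}
    (hmax : ∀ i ≠ i₀, c i < c i₀) :
    (fun t => ∑ i, exp (t * c i)) ~[atTop] fun t => exp (t * c i₀) := by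
  classical
  have hsplit : (fun t => ∑ i, exp (t * c i)) =
      (fun t => exp (t * c i₀)) + fun t => ∑ i ∈ univ.erase i₀, exp (t * c i) := by
    ext t
    exact (add_sum_erase _ _ (mem_univ i₀)).symm
  rw [hsplit]
  exact IsEquivalent.refl.add_isLittleO <| IsLittleO.fun_sum fun i hi =>
    isLittleO_exp_mul_atTop (hmax i (ne_of_mem_erase hi))

lemma log_sum_sq_softmax_eq {ι : Type*} [Fintype ι] (a : ι → ℝ) (i₀ : ι) :
    log (∑ i, (exp (a i) / ∑ j, exp (a j)) ^ 2) =
      log (∑ i, exp (a i - a i₀) ^ 2) - 2 * log (∑ i, exp (a i - a i₀)) := by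
  have hsq_pos : 0 < ∑ i, exp (a i - a i₀) ^ 2 :=
    sum_pos (fun i _ => by positivity) ⟨i₀, mem_univ _⟩
  have hsum_pos : 0 < ∑ i, exp (a i - a i₀) :=
    sum_pos (fun i _ => by positivity) ⟨i₀, mem_univ _⟩
  have hσ : ∀ i, exp (a i) / ∑ j, exp (a j) = exp (a i - a i₀) / ∑ j, exp (a j - a i₀) := by
    intro i
    simp only [exp_sub, ← sum_div]
    rw [div_div_div_cancel_right₀ (exp_pos _).ne']
  simp only [hσ, div_pow, ← sum_div]
  rw [log_div hsq_pos.ne' (by positivity), log_pow]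
  push_cast
  ring

lemma isEquivalent_log_sum_sq_sub_two_mul_log_sum {ι : Type*} [Fintype ι] (c : ι → ℝ) {i₀ : ι}
    (hmax : ∀ i ≠ i₀, c i < c i₀) (hneg : c i₀ < 0) :
    (fun t => log (1 + ∑ i, exp (t * c i) ^ 2) - 2 * log (1 + ∑ i, exp (t * c i)))
      ~[atTop] fun t => -2 * exp (t * c i₀) := by
  have hu := isEquivalent_sum_exp_mul_atTop c hmax
  have hv : (fun t => ∑ i, exp (t * c i) ^ 2) ~[atTop] fun t => exp (t * (2 * c i₀)) := by
    have hsq : ∀ t x, exp (t * (2 * x)) = exp (t * x) ^ 2 := fun t x => by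
      rw [← exp_nat_mul]; ring_nf
    simpa only [hsq] using
      isEquivalent_sum_exp_mul_atTop (fun i => 2 * c i) fun i hi => by linarith [hmax i hi]
  have hlogu := isEquivalent_log_one_add_nhds_zero.comp_tendsto
    (hu.symm.tendsto_nhds (tendsto_exp_mul_atTop_nhds_zero hneg))
  have hlogv := isEquivalent_log_one_add_nhds_zero.comp_tendsto
    (hv.symm.tendsto_nhds (tendsto_exp_mul_atTop_nhds_zero (by linarith)))
  have hmain : (fun t => 2 * log (1 + ∑ i, exp (t * c i))) ~[atTop]
      fun t => 2 * exp (t * c i₀) :=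
    (IsEquivalent.refl (u := fun _ => (2 : ℝ))).mul (hlogu.trans hu)
  have hrest : (fun t => log (1 + ∑ i, exp (t * c i) ^ 2)) =o[atTop]
      fun t => 2 * exp (t * c i₀) :=
    ((hlogv.trans hv).trans_isLittleO (isLittleO_exp_mul_atTop (by linarith))).const_mul_right'
      (isUnit_iff_ne_zero.mpr two_ne_zero)
  simpa [neg_mul] using (hmain.sub_isLittleO hrest).neg

/-- For strictly decreasing logits, `log ‖σ(λz)‖₂² ∼ -2 exp (λ (z₁ - z₀))` as `λ → ∞`. -/
theorem log_sq_norm_softmax_asymptotic {K : ℕ} (z : Fin (K + 2) → ℝ) (hz : StrictAnti z) :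
    Filter.Tendsto (fun lam : ℝ =>
        Real.log (∑ i, (Real.exp (lam * z i) / ∑ j, Real.exp (lam * z j)) ^ 2)
          / (-2 * Real.exp (lam * (z 1 - z 0))))
      Filter.atTop (nhds 1) := by
  set c : Fin (K + 1) → ℝ := fun j => z j.succ - z 0
  have hmax : ∀ j ≠ 0, c j < c 0 := fun j hj =>
    sub_lt_sub_right (hz (Fin.succ_lt_succ_iff.mpr (Fin.pos_iff_ne_zero.mpr hj))) _
  have hneg : c 0 < 0 := sub_neg.mpr (hz (Fin.succ_pos 0))
  have hlog : ∀ lam : ℝ, log (∑ i, (exp (lam * z i) / ∑ j, exp (lam * z j)) ^ 2) =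
      log (1 + ∑ j, exp (lam * c j) ^ 2) - 2 * log (1 + ∑ j, exp (lam * c j)) := by
    intro lam
    rw [log_sum_sq_softmax_eq (fun i => lam * z i) 0]
    simp only [Fin.sum_univ_succ (n := K + 1), sub_self, exp_zero, one_pow, c, mul_sub]
  have hequiv := isEquivalent_log_sum_sq_sub_two_mul_log_sum c hmax hneg
  simp only [c, Fin.succ_zero_eq_one, ← hlog] at hequiv
  exact (isEquivalent_iff_tendsto_one (.of_forall fun _ => by positivity)).mp hequiv
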